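/- arXiv:2605.11263 — 4 statements merged into one kernel-verified Lean document; each statement's English description precedes it below -/
import Mathlib

section
/- Let λ > 0, μ ≠ 0, and κ* > 0 be real numbers, and let α₂ ∈ ℝ satisfy λκ* + 2μα₂ ≥ 0. With α₄ := ( (μα₂ + λκ*) − √( λκ*(λκ* + 2μα₂) ) ) / (2μ²), the identity α₂ − 2μα₄ = ( √( λκ*(λκ* + 2μα₂) ) − λκ* ) / μ holds; consequently, if μ > 0 then α₂ − 2μα₄ > 0 if and only if α₂ > 0. -/
/-- Identity for the basis feedback numerator: `α₂ − 2μα₄ =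
(√(λκ*(λκ* + 2μα₂)) − λκ*)/μ`; consequently, if `μ > 0` then
`α₂ − 2μα₄ > 0 ↔ α₂ > 0` (the funding-rate chasing property). -/
theorem stmt_5 (lam mu kstar a2 : ℝ) (hlam : 0 < lam) (hmu : mu ≠ 0)
    (hk : 0 < kstar) (hroot : lam * kstar + 2 * mu * a2 ≥ 0)
    (a4 : ℝ)
    (ha4 : a4 = ((mu * a2 + lam * kstar)
      - Real.sqrt (lam * kstar * (lam * kstar + 2 * mu * a2))) / (2 * mu ^ 2)) :
    a2 - 2 * mu * a4
      = (Real.sqrt (lam * kstar * (lam * kstar + 2 * mu * a2)) - lam * kstar) / mu ∧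
    (0 < mu → (a2 - 2 * mu * a4 > 0 ↔ a2 > 0)) := by
  set s := Real.sqrt (lam * kstar * (lam * kstar + 2 * mu * a2)) with hs
  have hiden : a2 - 2 * mu * a4 = (s - lam * kstar) / mu := by
    rw [ha4]; field_simp; ring
  refine ⟨hiden, fun hmu0 => ?_⟩
  rw [hiden]
  have hlk : 0 < lam * kstar := mul_pos hlam hk
  have hsnn : 0 ≤ s := Real.sqrt_nonneg _
  constructor
  · intro h
    have hgt : lam * kstar < s := by
      have := (div_pos_iff.mp h)
      rcases this with ⟨h1, _⟩ | ⟨_, h2⟩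
      · linarith
      · linarith
    have : (lam * kstar) ^ 2 < s ^ 2 := by nlinarith
    rw [hs, Real.sq_sqrt (by nlinarith)] at this
    have h2 : 0 < lam * kstar * (2 * mu * a2) := by nlinarith
    have := mul_pos_iff.mp h2
    rcases this with ⟨_, h3⟩ | ⟨h3, _⟩
    · nlinarith
    · linarith
  · intro ha2
    have hlt : (lam * kstar) ^ 2 < lam * kstar * (lam * kstar + 2 * mu * a2) := by
      nlinarith [mul_pos hlk (mul_pos hmu0 ha2)]
    have : lam * kstar < s := by
      have key : Real.sqrt ((lam * kstar) ^ 2) < s := by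
        rw [hs]; exact Real.sqrt_lt_sqrt (by positivity) hlt
      rwa [Real.sqrt_sq hlk.le] at key
    exact div_pos (by linarith) hmu0
end

section
/- Let λ > 0, ρ, μ, φ, α₂ be real numbers with 4λφ > μ²(1−α₂)², and let α₁ := ( [λρ − μ(1−α₂)] − √( [λρ − μ(1−α₂)]² + 4λφ − μ²(1−α₂)² ) ) / 2. Then μ(1−α₂) + 2α₁ = λρ − √( (λρ − μ(1−α₂))² + 4λφ − μ²(1−α₂)² ), and if ρ > 0 then μ(1−α₂) + 2α₁ < 0 if and only if 2φ > ρμ(1−α₂). -/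
/-- Identity for the position feedback numerator: `μ(1−α₂) + 2α₁ =
λρ − √((λρ − μ(1−α₂))² + 4λφ − μ²(1−α₂)²)`; and if `ρ > 0` then
`μ(1−α₂) + 2α₁ < 0 ↔ 2φ > ρμ(1−α₂)` (the inventory risk brake). -/
theorem stmt_6 (lam rho mu phi a2 : ℝ) (hlam : 0 < lam)
    (hconc : 4 * lam * phi > mu ^ 2 * (1 - a2) ^ 2)
    (a1 : ℝ)
    (ha1 : a1 = ((lam * rho - mu * (1 - a2))
      - Real.sqrt ((lam * rho - mu * (1 - a2)) ^ 2 + 4 * lam * phi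
          - mu ^ 2 * (1 - a2) ^ 2)) / 2) :
    mu * (1 - a2) + 2 * a1
      = lam * rho - Real.sqrt ((lam * rho - mu * (1 - a2)) ^ 2 + 4 * lam * phi
          - mu ^ 2 * (1 - a2) ^ 2) ∧
    (0 < rho → (mu * (1 - a2) + 2 * a1 < 0 ↔ 2 * phi > rho * mu * (1 - a2))) := by
  have heq : mu * (1 - a2) + 2 * a1
      = lam * rho - Real.sqrt ((lam * rho - mu * (1 - a2)) ^ 2 + 4 * lam * phi
          - mu ^ 2 * (1 - a2) ^ 2) := by
    rw [ha1]; ring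
  refine ⟨heq, fun hrho => ?_⟩
  rw [heq]
  have hlr : (0:ℝ) ≤ lam * rho := (mul_pos hlam hrho).le
  have hiff := Real.lt_sqrt (y := (lam * rho - mu * (1 - a2)) ^ 2 + 4 * lam * phi
          - mu ^ 2 * (1 - a2) ^ 2) hlr
  constructor
  · intro h
    have h2 := hiff.mp (by linarith)
    nlinarith
  · intro h
    have h2 : (lam * rho) ^ 2 < (lam * rho - mu * (1 - a2)) ^ 2 + 4 * lam * phi
          - mu ^ 2 * (1 - a2) ^ 2 := by nlinarith
    have := hiff.mpr h2
    linarith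
end

section
/- Let λ > 0, φ > 0, λ_T > 0, and T ∈ ℝ. For t ≤ T define A(t) := −√(λφ) · ( λ_T + 2√(λφ) tanh(√(φ/λ)(T−t)) ) / ( 2√(λφ) + λ_T tanh(√(φ/λ)(T−t)) ). Then the denominator is strictly positive for all t ≤ T, A(T) = −λ_T/2, and A is differentiable on (−∞, T] with A'(t) = φ − A(t)²/λ for all t ≤ T. -/
/-!
With `s = √(λφ)` we have `√(φ/λ) = s/λ`, so `A(t) = F(t)` where
`F(t) = -s (λ_T + 2s g) / (2s + λ_T g)` and `g(t) = tanh (s(T - t)/λ)`. Since `g' = -(s/λ)(1 - g²)`,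
differentiating this Möbius transform of `g` gives `F' = (s² - F²)/λ = φ - F²/λ`; the terminal
value comes from `g(T) = 0`, and the denominator is positive because `g ≥ 0` on `t ≤ T`.
-/

open Real

namespace Real

theorem hasDerivAt_tanh (x : ℝ) : HasDerivAt tanh (1 - tanh x ^ 2) x := by
  have hcosh := cosh_pos x
  have h := (hasDerivAt_sinh x).div (hasDerivAt_cosh x) hcosh.ne'
  rw [show sinh / cosh = tanh from funext fun y => (tanh_eq_sinh_div_cosh y).symm] at h
  refine h.congr_deriv ?_
  rw [tanh_eq_sinh_div_cosh]
  field_simp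

theorem tanh_nonneg {x : ℝ} (hx : 0 ≤ x) : 0 ≤ tanh x := by
  rw [tanh_eq_sinh_div_cosh]
  exact div_nonneg (sinh_nonneg_iff.mpr hx) (cosh_pos x).le

end Real

noncomputable def riccatiSolution (lam s a T t : ℝ) : ℝ :=
  -s * (a + 2 * s * tanh (s / lam * (T - t))) / (2 * s + a * tanh (s / lam * (T - t)))

section riccatiSolution

variable {lam s a T : ℝ}

theorem riccatiSolution_terminal (hs : s ≠ 0) : riccatiSolution lam s a T T = -a / 2 := by
  rw [riccatiSolution, sub_self, mul_zero, tanh_zero]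
  field_simp
  ring

theorem riccatiSolution_denom_pos (hlam : 0 < lam) (hs : 0 < s) (ha : 0 ≤ a) {t : ℝ} (ht : t ≤ T) :
    0 < 2 * s + a * tanh (s / lam * (T - t)) := by
  have := tanh_nonneg (mul_nonneg (div_pos hs hlam).le (sub_nonneg.mpr ht))
  positivity

theorem hasDerivAt_riccatiSolution (hlam : lam ≠ 0) {t : ℝ}
    (hden : 2 * s + a * tanh (s / lam * (T - t)) ≠ 0) :
    HasDerivAt (riccatiSolution lam s a T) ((s ^ 2 - riccatiSolution lam s a T t ^ 2) / lam) t := by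
  set g : ℝ → ℝ := fun u => tanh (s / lam * (T - u))
  have hg : HasDerivAt g (-(s / lam) * (1 - g t ^ 2)) t := by
    have hinner := ((hasDerivAt_id t).const_sub T).const_mul (s / lam)
    refine ((hasDerivAt_tanh _).comp t hinner).congr_deriv ?_
    simp only [g, id]
    ring
  have hF := (((hg.const_mul (2 * s)).const_add a).const_mul (-s)).div
    ((hg.const_mul a).const_add (2 * s)) hden
  refine hF.congr_deriv ?_
  simp only [riccatiSolution, g]
  generalize tanh (s / lam * (T - t)) = y at hden ⊢
  have hden' : s * 2 + y * a ≠ 0 := by rwa [mul_comm s, mul_comm y]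
  field_simp
  ring

end riccatiSolution

theorem sqrt_div_eq_sqrt_mul_div {lam phi : ℝ} (hlam : 0 < lam) :
    √(phi / lam) = √(lam * phi) / lam := by
  rw [show phi / lam = lam * phi / lam ^ 2 by field_simp, sqrt_div' _ (sq_nonneg lam),
    sqrt_sq hlam.le]

/-- Explicit solution of the scalar Riccati terminal value problem
`A' = φ − A²/λ`, `A(T) = −λ_T/2` (case `μ = 0`): the denominator is positive
for `t ≤ T`, the terminal condition holds, and the ODE holds on `(−∞, T]`. -/
theorem stmt_14 (lam phi lamT T : ℝ) (hlam : 0 < lam) (hphi : 0 < phi)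
    (hlamT : 0 < lamT)
    (A : ℝ → ℝ)
    (hA : ∀ t ≤ T, A t = -Real.sqrt (lam * phi)
      * (lamT + 2 * Real.sqrt (lam * phi) * Real.tanh (Real.sqrt (phi / lam) * (T - t)))
      / (2 * Real.sqrt (lam * phi) + lamT * Real.tanh (Real.sqrt (phi / lam) * (T - t)))) :
    (∀ t ≤ T, 0 < 2 * Real.sqrt (lam * phi)
        + lamT * Real.tanh (Real.sqrt (phi / lam) * (T - t))) ∧
    A T = -lamT / 2 ∧
    (∀ t ≤ T, HasDerivWithinAt A (phi - (A t) ^ 2 / lam) (Set.Iic T) t) := by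
  set s := √(lam * phi)
  have hs : 0 < s := sqrt_pos.mpr (mul_pos hlam hphi)
  have hphi_eq : phi = s ^ 2 / lam := by
    rw [sq_sqrt (mul_pos hlam hphi).le]
    field_simp
  have hA_eq : Set.EqOn A (riccatiSolution lam s lamT T) (Set.Iic T) := fun t ht => by
    rw [hA t ht, riccatiSolution, sqrt_div_eq_sqrt_mul_div hlam]
  have hden : ∀ t ≤ T, 0 < 2 * s + lamT * tanh (s / lam * (T - t)) := fun t ht =>
    riccatiSolution_denom_pos hlam hs hlamT.le ht
  refine ⟨fun t ht => by rw [sqrt_div_eq_sqrt_mul_div hlam]; exact hden t ht, ?_, fun t ht => ?_⟩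
  · rw [hA_eq Set.self_mem_Iic, riccatiSolution_terminal hs.ne']
  · have hderiv := hasDerivAt_riccatiSolution hlam.ne' (hden t ht).ne'
    rw [hphi_eq, hA_eq ht, ← sub_div]
    exact hderiv.hasDerivWithinAt.congr hA_eq (hA_eq ht)
end

section
/- Let ρ, κ, c be real numbers with ρ > 0, κ > 0, and ρ + 2κ − c² > 0, and set κ* := ρ + 2κ − c². Let λ > 0, μ > 0, and α₂ ∈ ℝ with λκ* + 2μα₂ ≥ 0, and let α₄ := ( (μα₂ + λκ*) − √( λκ*(λκ* + 2μα₂) ) ) / (2μ²) and γ_D := (α₂ − 2μα₄)/(2λ). Then the effective mean-reversion speed of the closed-loop basis satisfies κ + μγ_D ≥ κ if and only if α₂ ≥ 0; in particular, if α₂ > 0 then κ + μγ_D > κ. -/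
/-- The effective mean-reversion speed of the closed-loop basis satisfies
`κ + μγ_D ≥ κ` iff `α₂ ≥ 0`; in particular `α₂ > 0` implies `κ + μγ_D > κ`. -/
theorem stmt_18 (rho kappa c lam mu a2 kstar : ℝ)
    (hrho : 0 < rho) (hk : 0 < kappa) (hstab : 0 < rho + 2 * kappa - c ^ 2)
    (hkstar : kstar = rho + 2 * kappa - c ^ 2)
    (hlam : 0 < lam) (hmu : 0 < mu)
    (hroot : lam * kstar + 2 * mu * a2 ≥ 0)
    (a4 gD : ℝ)
    (ha4 : a4 = ((mu * a2 + lam * kstar)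
      - Real.sqrt (lam * kstar * (lam * kstar + 2 * mu * a2))) / (2 * mu ^ 2))
    (hgD : gD = (a2 - 2 * mu * a4) / (2 * lam)) :
    (kappa + mu * gD ≥ kappa ↔ a2 ≥ 0) ∧
    (0 < a2 → kappa + mu * gD > kappa) := by
  have hL : 0 < lam * kstar := by
    have : 0 < kstar := hkstar ▸ hstab
    positivity
  have harg : 0 ≤ lam * kstar * (lam * kstar + 2 * mu * a2) :=
    mul_nonneg hL.le (by linarith)
  set s := Real.sqrt (lam * kstar * (lam * kstar + 2 * mu * a2)) with hs
  have hs2 : s ^ 2 = lam * kstar * (lam * kstar + 2 * mu * a2) := Real.sq_sqrt harg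
  have hsnn : 0 ≤ s := Real.sqrt_nonneg _
  have hgD' : mu * gD = (s - lam * kstar) / (2 * lam) := by
    rw [hgD, ha4]; field_simp; ring
  refine ⟨⟨fun h => ?_, fun h => ?_⟩, fun h => ?_⟩
  · rw [hgD'] at h
    have h1 : 0 ≤ (s - lam * kstar) / (2 * lam) := by linarith
    have h2 : 0 ≤ s - lam * kstar := by
      by_contra hc
      push_neg at hc
      have := div_neg_of_neg_of_pos hc (by linarith : (0:ℝ) < 2 * lam)
      linarith
    nlinarith [hs2, mul_pos hmu hL,
      mul_le_mul (show lam * kstar ≤ s by linarith) (show lam * kstar ≤ s by linarith) hL.le hsnn]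
  · rw [hgD']
    have h2 : lam * kstar ≤ s := by
      by_contra hc
      push_neg at hc
      nlinarith [hs2, mul_self_lt_mul_self hsnn hc, mul_nonneg (mul_nonneg hmu.le h) hL.le]
    have := div_nonneg (by linarith : (0:ℝ) ≤ s - lam * kstar)
      (by linarith : (0:ℝ) ≤ 2 * lam)
    linarith
  · rw [hgD']
    have h2 : lam * kstar < s := by
      by_contra hc
      push_neg at hc
      nlinarith [hs2, mul_self_le_mul_self hsnn hc, mul_pos (mul_pos hmu h) hL]
    have := div_pos (by linarith : (0:ℝ) < s - lam * kstar)
      (by linarith : (0:ℝ) < 2 * lam)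
    linarith
end
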